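/- Let C and I be finite sets, let S⁺ ⊆ C × I be a set of observed pairs with targets y : S⁺ → ℝ and confidences α : S⁺ → ℝ satisfying α(s) > α₀ > 0 for all s ∈ S⁺, and let S⁰ = (C × I) \ S⁺ with target 0 and confidence α₀. For any function ŷ : C × I → ℝ, the implicit loss Σ_{(c,i)∈S⁺} α(c,i)(ŷ(c,i) - y(c,i))² + α₀ Σ_{(c,i)∈S⁰} ŷ(c,i)² differs only by an additive constant (independent of ŷ) from Σ_{(c,i)∈S⁺} (α(c,i) - α₀)(ŷ(c,i) - (α(c,i)/(α(c,i)-α₀)) y(c,i))² + α₀ Σ_{c∈C} Σ_{i∈I} ŷ(c,i)². Consequently both objectives have the same minimizers over any class of functions ŷ. -/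
import Mathlib


/-- Lemma 1: the implicit loss differs from the rescaled loss plus implicit
regularizer only by an additive constant, hence both have the same minimizers. -/
theorem implicit_loss_rephrasing
    {C I : Type*} [Fintype C] [Fintype I] [DecidableEq C] [DecidableEq I]
    (Sp : Finset (C × I)) (y α : C × I → ℝ) (α₀ : ℝ)
    (hα₀ : 0 < α₀) (hα : ∀ s ∈ Sp, α₀ < α s) :
    ∃ K : ℝ,
      (∀ yh : C × I → ℝ,
        (∑ s ∈ Sp, α s * (yh s - y s) ^ 2
            + α₀ * ∑ s ∈ Finset.univ \ Sp, (yh s) ^ 2)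
        = (∑ s ∈ Sp, (α s - α₀) * (yh s - (α s / (α s - α₀)) * y s) ^ 2
            + α₀ * ∑ c : C, ∑ i : I, (yh (c, i)) ^ 2) + K) ∧
      (∀ yh₁ yh₂ : C × I → ℝ,
        ((∑ s ∈ Sp, α s * (yh₁ s - y s) ^ 2
            + α₀ * ∑ s ∈ Finset.univ \ Sp, (yh₁ s) ^ 2)
          ≤ (∑ s ∈ Sp, α s * (yh₂ s - y s) ^ 2
            + α₀ * ∑ s ∈ Finset.univ \ Sp, (yh₂ s) ^ 2))
        ↔ ((∑ s ∈ Sp, (α s - α₀) * (yh₁ s - (α s / (α s - α₀)) * y s) ^ 2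
            + α₀ * ∑ c : C, ∑ i : I, (yh₁ (c, i)) ^ 2)
          ≤ (∑ s ∈ Sp, (α s - α₀) * (yh₂ s - (α s / (α s - α₀)) * y s) ^ 2
            + α₀ * ∑ c : C, ∑ i : I, (yh₂ (c, i)) ^ 2))) := by
  have h1 : ∀ yh : C × I → ℝ,
      (∑ s ∈ Sp, α s * (yh s - y s) ^ 2
          + α₀ * ∑ s ∈ Finset.univ \ Sp, (yh s) ^ 2)
      = (∑ s ∈ Sp, (α s - α₀) * (yh s - (α s / (α s - α₀)) * y s) ^ 2
          + α₀ * ∑ c : C, ∑ i : I, (yh (c, i)) ^ 2)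
        + ∑ s ∈ Sp, (α s * y s ^ 2 - α s ^ 2 / (α s - α₀) * y s ^ 2) := by
    intro yh
    have hfull : (∑ c : C, ∑ i : I, (yh (c, i)) ^ 2)
        = ∑ s ∈ Sp, (yh s) ^ 2 + ∑ s ∈ Finset.univ \ Sp, (yh s) ^ 2 := by
      rw [show (∑ c : C, ∑ i : I, (yh (c, i)) ^ 2) = ∑ s : C × I, (yh s) ^ 2
          from (Fintype.sum_prod_type (fun s : C × I => (yh s) ^ 2)).symm,
        ← Finset.sum_sdiff (Finset.subset_univ Sp)]
      ring
    rw [hfull]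
    have hterm : ∀ s ∈ Sp,
        α s * (yh s - y s) ^ 2
          = (α s - α₀) * (yh s - (α s / (α s - α₀)) * y s) ^ 2
            + α₀ * (yh s) ^ 2
            + (α s * y s ^ 2 - α s ^ 2 / (α s - α₀) * y s ^ 2) := by
      intro s hs
      have hne : α s - α₀ ≠ 0 := by have := hα s hs; linarith
      field_simp
      ring
    rw [Finset.sum_congr rfl hterm, Finset.sum_add_distrib, Finset.sum_add_distrib,
      ← Finset.mul_sum, mul_add]
    ring
  refine ⟨_, h1, fun yh₁ yh₂ => ?_⟩
  rw [h1 yh₁, h1 yh₂]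
  constructor <;> intro h <;> linarith
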